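/- For every n ≥ 1 and every x ∈ [0,1], the modified Durrmeyer operator satisfies D_n^{M,1}(e_2; x) = (a_1(n) + 2a_0(n)) x^2 − [(8x^2 − 5x)a_0(n) + (5x^2 − 3x)a_1(n)] · 2n/((n+2)(n+3)) − 2[(x^2 + 5x − 3)a_1(n) + (4x^2 + 5x − 4)a_0(n)]/((n+2)(n+3)), where e_2(t) = t^2. -/

import Mathlib

open Filter Topology

/-- Bernstein basis polynomial `p_{n,k}(x)`, zero when `k < 0` or `k > n`. -/
noncomputable def bern (n : ℕ) (k : ℤ) (x : ℝ) : ℝ :=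
  if 0 ≤ k ∧ k ≤ (n : ℤ) then (n.choose k.toNat : ℝ) * x ^ k.toNat * (1 - x) ^ (n - k.toNat)
  else 0

/-- Modified Bernstein basis `p_{n,k}^{M,1}(x)` of Khosravian-Arab et al. -/
noncomputable def pM1 (a0 a1 : ℕ → ℝ) (n : ℕ) (k : ℤ) (x : ℝ) : ℝ :=
  (a1 n * x + a0 n) * bern (n - 1) k x + (a1 n * (1 - x) + a0 n) * bern (n - 1) (k - 1) x

/-- First-order modified Durrmeyer operator `D_n^{M,1}(f;x)`. -/
noncomputable def DM1 (a0 a1 : ℕ → ℝ) (n : ℕ) (f : ℝ → ℝ) (x : ℝ) : ℝ :=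
  ((n : ℝ) + 1) * ∑ k ∈ Finset.range (n + 1),
    pM1 a0 a1 n k x * ∫ t in (0:ℝ)..1, bern n k t * f t

/-!
The integrals against `e₂` are Beta integrals,
`∫₀¹ p_{n,k}(t) t² dt = (k+1)(k+2)/((n+1)(n+2)(n+3))`. Since `p^{M,1}_{n,k}` combines
`p_{n-1,k}` and `p_{n-1,k-1}`, shifting the index of the second part writes `D_n^{M,1}(e₂; x)` as
two sums `∑ₖ p_{n-1,k}(x) q(k)` with quadratic `q`, and these are evaluated by the first three
moments of the Bernstein basis.
-/

open Finset Polynomial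
open scoped Nat

theorem integral_pow_mul_one_sub_pow (a b : ℕ) :
    ∫ x in (0:ℝ)..1, x ^ a * (1 - x) ^ b = (a ! * b ! : ℝ) / (a + b + 1)! := by
  induction b generalizing a with
  | zero =>
    simp only [pow_zero, mul_one, integral_pow, Nat.factorial_zero, Nat.add_zero,
      Nat.factorial_succ, Nat.cast_mul, Nat.cast_one]
    field_simp
    push_cast
    ring
  | succ b ih =>
    have hsplit : ∀ x : ℝ,
        x ^ a * (1 - x) ^ (b + 1) = x ^ a * (1 - x) ^ b - x ^ (a + 1) * (1 - x) ^ b :=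
      fun x => by ring
    simp_rw [hsplit]
    rw [intervalIntegral.integral_sub (Continuous.intervalIntegrable (by fun_prop) _ _)
      (Continuous.intervalIntegrable (by fun_prop) _ _), ih, ih,
      show a + 1 + b + 1 = a + b + 1 + 1 by ring, show a + (b + 1) + 1 = a + b + 1 + 1 by ring]
    simp only [Nat.factorial_succ]
    push_cast
    field_simp
    ring

theorem bern_natCast (m k : ℕ) (x : ℝ) : bern m k x = (bernsteinPolynomial ℝ m k).eval x := by
  rw [bern]
  split_ifs with hk
  · simp [bernsteinPolynomial]
  · rw [bernsteinPolynomial.eq_zero_of_lt ℝ (by omega), eval_zero]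

theorem bern_neg_one (m : ℕ) (x : ℝ) : bern m (-1) x = 0 := by
  simp [bern]

theorem integral_bern_mul_sq {n k : ℕ} (hk : k ≤ n) :
    ∫ t in (0:ℝ)..1, bern n k t * t ^ 2
      = ((k:ℝ) + 1) * ((k:ℝ) + 2) / (((n:ℝ) + 1) * ((n:ℝ) + 2) * ((n:ℝ) + 3)) := by
  have hpt : ∀ t : ℝ,
      bern n k t * t ^ 2 = (n.choose k : ℝ) * (t ^ (k + 2) * (1 - t) ^ (n - k)) := fun t => by
    simp only [bern_natCast, bernsteinPolynomial, eval_mul, eval_natCast, eval_pow, eval_X,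
      eval_sub, eval_one]
    ring
  have hchoose : (n.choose k * k ! * (n - k)! : ℝ) = n ! := by
    exact_mod_cast Nat.choose_mul_factorial_mul_factorial hk
  have hchoose_ne : (n.choose k : ℝ) ≠ 0 := by exact_mod_cast (Nat.choose_pos hk).ne'
  simp_rw [hpt]
  rw [intervalIntegral.integral_const_mul, integral_pow_mul_one_sub_pow,
    show k + 2 + (n - k) + 1 = n + 1 + 1 + 1 by omega]
  simp only [Nat.factorial_succ]
  push_cast
  rw [← hchoose]
  field_simp
  ring

theorem sum_eval_bernsteinPolynomial_mul_quadratic (m : ℕ) (x : ℝ) (q : ℝ → ℝ)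
    (c d e : ℝ) (hq : ∀ t, q t = c * t ^ 2 + d * t + e) :
    ∑ k ∈ range (m + 1), (bernsteinPolynomial ℝ m k).eval x * q k
      = c * ((m:ℝ) * ((m:ℝ) - 1) * x ^ 2 + m * x) + d * (m * x) + e := by
  have h0 := congrArg (eval x) (bernsteinPolynomial.sum ℝ m)
  have h1 := congrArg (eval x) (bernsteinPolynomial.sum_smul ℝ m)
  have h2 := congrArg (eval x) (bernsteinPolynomial.sum_mul_smul ℝ m)
  have hcast : ∀ k : ℕ, ((k * (k - 1) : ℕ) : ℝ) = (k : ℝ) * ((k : ℝ) - 1) := by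
    rintro (_ | k) <;> simp
  simp only [eval_finsetSum, nsmul_eq_mul, eval_mul, eval_natCast, hcast, eval_one, eval_pow,
    eval_X] at h0 h1 h2
  calc ∑ k ∈ range (m + 1), (bernsteinPolynomial ℝ m k).eval x * q k
      = c * ∑ k ∈ range (m + 1),
            (k : ℝ) * ((k : ℝ) - 1) * (bernsteinPolynomial ℝ m k).eval x
        + (c + d) * ∑ k ∈ range (m + 1), (k : ℝ) * (bernsteinPolynomial ℝ m k).eval x
        + e * ∑ k ∈ range (m + 1), (bernsteinPolynomial ℝ m k).eval x := by
        simp only [mul_sum, ← sum_add_distrib, hq]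
        exact sum_congr rfl fun k _ => by ring
    _ = _ := by rw [h0, h1, h2]; ring

theorem sum_pM1_mul (a0 a1 : ℕ → ℝ) (m : ℕ) (x : ℝ) (w : ℕ → ℝ) :
    ∑ k ∈ range (m + 1 + 1), pM1 a0 a1 (m + 1) k x * w k
      = (a1 (m + 1) * x + a0 (m + 1)) * ∑ k ∈ range (m + 1), bern m k x * w k
        + (a1 (m + 1) * (1 - x) + a0 (m + 1))
          * ∑ k ∈ range (m + 1), bern m k x * w (k + 1) := by
  have htrunc : ∑ k ∈ range (m + 1 + 1), bern m k x * w k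
      = ∑ k ∈ range (m + 1), bern m k x * w k := by
    rw [sum_range_succ, bern_natCast, bernsteinPolynomial.eq_zero_of_lt ℝ (Nat.lt_succ_self m),
      eval_zero, zero_mul, add_zero]
  have hshift : ∑ k ∈ range (m + 1 + 1), bern m ((k : ℤ) - 1) x * w k
      = ∑ k ∈ range (m + 1), bern m k x * w (k + 1) := by
    rw [sum_range_succ']
    simp [bern_neg_one]
  simp only [pM1, Nat.add_sub_cancel, add_mul, sum_add_distrib, mul_assoc, ← mul_sum]
  rw [htrunc, hshift]

theorem DM1_moment_e2_general (a0 a1 : ℕ → ℝ) (n : ℕ) (hn : 1 ≤ n)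
    (x : ℝ) :
    DM1 a0 a1 n (fun t => t ^ 2) x
      = (a1 n + 2 * a0 n) * x ^ 2
        - ((8 * x ^ 2 - 5 * x) * a0 n + (5 * x ^ 2 - 3 * x) * a1 n)
            * (2 * (n : ℝ)) / (((n : ℝ) + 2) * ((n : ℝ) + 3))
        - 2 * ((x ^ 2 + 5 * x - 3) * a1 n + (4 * x ^ 2 + 5 * x - 4) * a0 n)
            / (((n : ℝ) + 2) * ((n : ℝ) + 3)) := by
  obtain ⟨m, rfl⟩ := Nat.exists_eq_add_of_le' hn
  set D : ℝ := ((m + 1 : ℕ) + 1) * ((m + 1 : ℕ) + 2) * ((m + 1 : ℕ) + 3) with hD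
  have hmoments : ∀ k ∈ range (m + 1 + 1),
      ∫ t in (0:ℝ)..1, bern (m + 1) k t * t ^ 2 = ((k:ℝ) + 1) * ((k:ℝ) + 2) / D :=
    fun k hk => integral_bern_mul_sq (Nat.lt_succ_iff.mp (mem_range.mp hk))
  rw [DM1, sum_congr rfl fun k hk => by rw [hmoments k hk],
    sum_pM1_mul a0 a1 m x fun k => ((k:ℝ) + 1) * ((k:ℝ) + 2) / D]
  simp only [bern_natCast, Nat.cast_add, Nat.cast_one]
  rw [sum_eval_bernsteinPolynomial_mul_quadratic m x (fun t => (t + 1) * (t + 2) / D)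
      (1 / D) (3 / D) (2 / D) fun t => by ring,
    sum_eval_bernsteinPolynomial_mul_quadratic m x (fun t => (t + 1 + 1) * (t + 1 + 2) / D)
      (1 / D) (5 / D) (6 / D) fun t => by ring, hD]
  push_cast
  field_simp
  ring

theorem DM1_moment_e2 (a0 a1 : ℕ → ℝ) (n : ℕ) (hn : 1 ≤ n)
    (x : ℝ) (hx : x ∈ Set.Icc (0:ℝ) 1) :
    DM1 a0 a1 n (fun t => t ^ 2) x
      = (a1 n + 2 * a0 n) * x ^ 2
        - ((8 * x ^ 2 - 5 * x) * a0 n + (5 * x ^ 2 - 3 * x) * a1 n)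
            * (2 * (n : ℝ)) / (((n : ℝ) + 2) * ((n : ℝ) + 3))
        - 2 * ((x ^ 2 + 5 * x - 3) * a1 n + (4 * x ^ 2 + 5 * x - 4) * a0 n)
            / (((n : ℝ) + 2) * ((n : ℝ) + 3)) :=
  DM1_moment_e2_general a0 a1 n hn x
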